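/- arXiv:1612.00921 — 6 statements merged into one kernel-verified Lean document; each statement's English description precedes it below -/
import Mathlib

section
/- Let η ∈ 𝒟(ℝ) with a ≤ η'(x) ≤ b for all x (0 < a < b), and let ξ = η⁻¹ be its inverse (a bijection of ℝ). Then ∫_ℝ |ξ(x) − x|² dx ≤ b ∫_ℝ |η(y) − y|² dy; in particular the left-hand integral is finite. -/
open Filter MeasureTheory

/-- `η` belongs to the diffeomorphism group `𝒟(ℝ)` with derivative bounds `a ≤ η' ≤ b`. -/
def InD (η : ℝ → ℝ) (a b : ℝ) : Prop :=
  ContDiff ℝ 1 η ∧ (∀ x : ℝ, a ≤ deriv η x ∧ deriv η x ≤ b) ∧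
  Integrable (fun x : ℝ => (η x - x) ^ 2) ∧
  Integrable (fun x : ℝ => (deriv η x - 1) ^ 2) ∧
  Tendsto (deriv η) (cocompact ℝ) (nhds 1)

/-!
Substituting `x = η y` turns `∫ (ξ x - x)²` into `∫ η'(y) (y - η y)²`, and `0 < η' ≤ b`.
-/

section ChangeOfVariables

variable {F : Type*} [NormedAddCommGroup F] [NormedSpace ℝ F] {η : ℝ → ℝ}

theorem Function.Bijective.integrable_iff_integrable_abs_deriv_smul_comp
    (hd : Differentiable ℝ η) (hη : η.Bijective) (g : ℝ → F) :
    Integrable g ↔ Integrable fun y => |deriv η y| • g (η y) := by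
  have h := integrableOn_image_iff_integrableOn_abs_deriv_smul MeasurableSet.univ
    (fun y _ => (hd y).hasDerivAt.hasDerivWithinAt) hη.injective.injOn g
  rwa [Set.image_univ, hη.surjective.range_eq, integrableOn_univ, integrableOn_univ] at h

theorem Function.Bijective.integral_eq_integral_abs_deriv_smul_comp
    (hd : Differentiable ℝ η) (hη : η.Bijective) (g : ℝ → F) :
    ∫ x, g x = ∫ y, |deriv η y| • g (η y) := by
  have h := integral_image_eq_integral_abs_deriv_smul MeasurableSet.univ
    (fun y _ => (hd y).hasDerivAt.hasDerivWithinAt) hη.injective.injOn g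
  rwa [Set.image_univ, hη.surjective.range_eq, Measure.restrict_univ] at h

theorem Function.Bijective.integral_le_mul_integral_comp_of_abs_deriv_le
    {g : ℝ → ℝ} {b : ℝ} (hd : Differentiable ℝ η) (hη : η.Bijective)
    (hb : ∀ y, |deriv η y| ≤ b) (hg : 0 ≤ g) (hgη : Integrable (g ∘ η)) :
    Integrable g ∧ ∫ x, g x ≤ b * ∫ y, g (η y) := by
  have hweighted : Integrable fun y => |deriv η y| • g (η y) :=
    hgη.bdd_mul (measurable_deriv η).abs.aestronglyMeasurable
      (.of_forall fun y => by simpa only [Real.norm_eq_abs, abs_abs] using hb y)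
  refine ⟨(hη.integrable_iff_integrable_abs_deriv_smul_comp hd g).2 hweighted, ?_⟩
  rw [hη.integral_eq_integral_abs_deriv_smul_comp hd g, ← integral_const_mul]
  exact integral_mono hweighted (hgη.const_mul b) fun y =>
    mul_le_mul_of_nonneg_right (hb y) (hg (η y))

end ChangeOfVariables

theorem inverse_L2_bound_general (η ξ : ℝ → ℝ) (a b : ℝ) (ha : 0 < a)
    (hη : InD η a b)
    (hl : Function.LeftInverse ξ η) (hr : Function.RightInverse ξ η) :
    Integrable (fun x : ℝ => (ξ x - x) ^ 2) ∧
    ∫ x : ℝ, (ξ x - x) ^ 2 ≤ b * ∫ y : ℝ, (η y - y) ^ 2 := by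
  obtain ⟨hC, hbd, hI, -, -⟩ := hη
  have hcomp : (fun y => (ξ (η y) - η y) ^ 2) = fun y => (η y - y) ^ 2 := by
    funext y
    rw [hl y]
    ring
  have habs : ∀ y, |deriv η y| ≤ b := fun y => by
    rw [abs_of_pos (ha.trans_le (hbd y).1)]
    exact (hbd y).2
  have hbij : η.Bijective := ⟨hl.injective, hr.surjective⟩
  have h := hbij.integral_le_mul_integral_comp_of_abs_deriv_le (g := fun x => (ξ x - x) ^ 2)
    (hC.differentiable one_ne_zero) habs (fun x => sq_nonneg _)
    (by simpa only [Function.comp_def, hcomp] using hI)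
  simpa only [hcomp] using h

/-- For `η ∈ 𝒟(ℝ)` with inverse `ξ`, `∫ |ξ(x) − x|² dx ≤ b ∫ |η(y) − y|² dy`;
in particular the left-hand integral is finite. -/
theorem inverse_L2_bound (η ξ : ℝ → ℝ) (a b : ℝ) (ha : 0 < a) (hab : a < b)
    (hη : InD η a b)
    (hl : Function.LeftInverse ξ η) (hr : Function.RightInverse ξ η) :
    Integrable (fun x : ℝ => (ξ x - x) ^ 2) ∧
    ∫ x : ℝ, (ξ x - x) ^ 2 ≤ b * ∫ y : ℝ, (η y - y) ^ 2 :=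
  inverse_L2_bound_general η ξ a b ha hη hl hr
end

section
/- The inversion map on 𝒟(ℝ) is continuous with respect to the distance D(η, ζ) = ‖η − ζ‖_{1,1}: for every η₁ ∈ 𝒟(ℝ) with inverse ξ₁ and every ε > 0, there exists δ > 0 such that for every η₂ ∈ 𝒟(ℝ) with inverse ξ₂, if ‖η₁ − η₂‖_{1,1} < δ then ‖ξ₁ − ξ₂‖_{1,1} < ε. -/
/-!
Write `u = η₁ - η₂`. Since `η₂ ∘ ξ₂ = id = η₁ ∘ ξ₁`, the lower bound on `η₂'` gives
`|ξ₁ - ξ₂| ≤ |u ∘ ξ₁| / a₂` pointwise, and the substitution `x = η₁ y` turns this into an `L²`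
bound by `‖u‖₂`. For the derivatives, `ξᵢ' = 1 / (ηᵢ' ∘ ξᵢ)`, so `(ξ₁ - ξ₂)'` is controlled by
`u' ∘ ξ₂` and by `η₁' ∘ ξ₁ - η₁' ∘ ξ₂`. The latter is uniformly small because `η₁'` is uniformly
continuous (it tends to `1` at infinity), and small in `L²` after approximating `η₁' - 1` in `L²`
by a continuous compactly supported function. The supremum of `|u|` in `norm11` is never used:
a function with small `L²` norm and small derivative is small pointwise.
-/

open Filter MeasureTheory

/-- The norm `‖u‖_{1,1} = ‖u‖_{C¹} + ‖u‖_{H¹}`. -/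
noncomputable def norm11 (u : ℝ → ℝ) : ℝ :=
  (⨆ x : ℝ, |u x|) + (⨆ x : ℝ, |deriv u x|) +
    Real.sqrt ((∫ x : ℝ, (u x) ^ 2) + ∫ x : ℝ, (deriv u x) ^ 2)

open Set

theorem abs_inv_sub_inv_le {A B a₁ a₂ : ℝ} (ha₁ : 0 < a₁) (hA : a₁ ≤ A) (ha₂ : 0 < a₂)
    (hB : a₂ ≤ B) : |A⁻¹ - B⁻¹| ≤ |A - B| / (a₁ * a₂) := by
  have hA0 := ha₁.trans_le hA
  have hB0 := ha₂.trans_le hB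
  rw [← Real.dist_eq, dist_inv_inv₀ hA0.ne' hB0.ne', Real.dist_eq, Real.norm_of_nonneg hA0.le,
    Real.norm_of_nonneg hB0.le]
  gcongr

theorem MeasureTheory.MemLp.integrable_sq_sub {p q : ℝ → ℝ} (hp : MemLp p 2) (hq : MemLp q 2) :
    Integrable fun x => (p x - q x) ^ 2 :=
  (memLp_two_iff_integrable_sq (hp.sub hq).1).1 (hp.sub hq)

theorem abs_le_of_integral_sq_le {u u' : ℝ → ℝ} (hu : ∀ x, HasDerivAt u (u' x) x)
    (hu2 : Integrable fun x => u x ^ 2) {M L : ℝ} (hM : 0 ≤ M) (hI : ∫ x, u x ^ 2 ≤ M ^ 2)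
    (hL : ∀ x, |u' x| ≤ L) (y : ℝ) : |u y| ≤ M + L := by
  by_contra! hy
  -- on `[y, y + 1]` the function stays above `|u y| - L > M` in absolute value
  have hlow : ∀ x ∈ Icc y (y + 1), (|u y| - L) ^ 2 ≤ u x ^ 2 := by
    intro x hx
    have hux := Convex.norm_image_sub_le_of_norm_deriv_le (fun x _ => (hu x).differentiableAt)
      (fun x _ => (hu x).deriv ▸ hL x) convex_univ (mem_univ y) (mem_univ x)
    simp only [Real.norm_eq_abs] at hux
    have hxy : |x - y| ≤ 1 := abs_le.2 ⟨by linarith [hx.1], by linarith [hx.2]⟩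
    have hL0 : 0 ≤ L := (abs_nonneg _).trans (hL y)
    have : |u y| - L ≤ |u x| := by
      linarith [abs_sub_abs_le_abs_sub (u y) (u x), abs_sub_comm (u x) (u y),
        mul_le_of_le_one_right hL0 hxy]
    rw [← sq_abs (u x)]
    exact pow_le_pow_left₀ (by linarith) this 2
  have := setIntegral_ge_of_const_le_real measurableSet_Icc (by simp) hlow hu2.integrableOn
  rw [Real.volume_real_Icc_of_le (by linarith), add_sub_cancel_left, mul_one] at this
  have hsub := setIntegral_le_integral (s := Icc y (y + 1)) hu2
    (Eventually.of_forall fun x => sq_nonneg (u x))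
  nlinarith

theorem integral_sq_le_of_eq_add_sub {α : Type*} [MeasurableSpace α] {μ : Measure α}
    {f p q r : α → ℝ} (hf : ∀ x, f x = p x + q x - r x) (hfm : AEStronglyMeasurable f μ)
    (hp : Integrable (fun x => p x ^ 2) μ) (hq : Integrable (fun x => q x ^ 2) μ)
    (hr : Integrable (fun x => r x ^ 2) μ) :
    Integrable (fun x => f x ^ 2) μ ∧
      ∫ x, f x ^ 2 ∂μ ≤ 3 * ((∫ x, p x ^ 2 ∂μ) + (∫ x, q x ^ 2 ∂μ) + ∫ x, r x ^ 2 ∂μ) := by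
  have hpq : Integrable (fun x => p x ^ 2 + q x ^ 2) μ := hp.add hq
  have hdom : Integrable (fun x => 3 * (p x ^ 2 + q x ^ 2 + r x ^ 2)) μ := (hpq.add hr).const_mul 3
  have hpt : ∀ x, f x ^ 2 ≤ 3 * (p x ^ 2 + q x ^ 2 + r x ^ 2) := fun x => by
    rw [hf]
    nlinarith [sq_nonneg (p x - q x), sq_nonneg (p x + r x), sq_nonneg (q x + r x)]
  refine ⟨hdom.mono' (hfm.pow 2) (Eventually.of_forall fun x => ?_), ?_⟩
  · rw [Real.norm_of_nonneg (sq_nonneg _)]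
    exact hpt x
  calc ∫ x, f x ^ 2 ∂μ ≤ ∫ x, 3 * (p x ^ 2 + q x ^ 2 + r x ^ 2) ∂μ :=
        integral_mono_of_nonneg (Eventually.of_forall fun _ => sq_nonneg _) hdom
          (Eventually.of_forall hpt)
    _ = _ := by rw [integral_const_mul, integral_add hpq hr, integral_add hp hq]

theorem exists_pos_integral_sq_comp_sub_le_of_hasCompactSupport {g η ξ : ℝ → ℝ}
    (hg : Continuous g) (hgs : HasCompactSupport g) (hη : Continuous η) (hξ : Continuous ξ)
    (hr : Function.RightInverse ξ η) {t : ℝ} (ht : 0 < t) :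
    ∃ ρ > 0, ∀ ξ' : ℝ → ℝ, Continuous ξ' → (∀ x, |ξ x - ξ' x| ≤ ρ) →
      Integrable (fun x => (g (ξ x) - g (ξ' x)) ^ 2) ∧ ∫ x, (g (ξ x) - g (ξ' x)) ^ 2 ≤ t := by
  set S := η '' Metric.cthickening 1 (tsupport g)
  have hS : IsCompact S := hgs.isCompact.cthickening.image hη
  have hzero : ∀ ξ' : ℝ → ℝ, (∀ x, |ξ x - ξ' x| ≤ 1) → ∀ x ∉ S, (g (ξ x) - g (ξ' x)) ^ 2 = 0 := by
    intro ξ' hξ' x hx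
    have hξx : ξ x ∉ Metric.cthickening 1 (tsupport g) := fun h => hx ⟨ξ x, h, hr x⟩
    have hξ'x : ξ' x ∉ tsupport g := fun h =>
      hξx (Metric.mem_cthickening_of_dist_le _ _ _ _ h (by rw [Real.dist_eq]; exact hξ' x))
    rw [image_eq_zero_of_notMem_tsupport hξ'x,
      image_eq_zero_of_notMem_tsupport fun h => hξx (Metric.self_subset_cthickening _ h)]
    simp
  set c := volume.real S
  have hc : 0 ≤ c := measureReal_nonneg
  set t' := √(t / (c + 1))
  obtain ⟨ρ₀, hρ₀, hmod⟩ := Metric.uniformContinuous_iff.1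
    (hg.uniformContinuous_of_tendsto_cocompact hgs.is_zero_at_infty) t'
    (Real.sqrt_pos.2 (by positivity))
  refine ⟨min 1 (ρ₀ / 2), by positivity, fun ξ' hξ' hclose => ⟨?_, ?_⟩⟩
  · exact ((hg.comp hξ).sub (hg.comp hξ')).pow 2 |>.integrable_of_hasCompactSupport
      (HasCompactSupport.intro hS
        (hzero ξ' fun x => (hclose x).trans (min_le_left _ _)))
  · have hbound : ∀ x, ‖(g (ξ x) - g (ξ' x)) ^ 2‖ ≤ t' ^ 2 := fun x => by
      have : dist (ξ x) (ξ' x) < ρ₀ := by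
        rw [Real.dist_eq]; linarith [hclose x, min_le_right 1 (ρ₀ / 2)]
      rw [Real.norm_eq_abs, abs_pow, ← Real.dist_eq]
      exact pow_le_pow_left₀ dist_nonneg (hmod this).le 2
    rw [← setIntegral_eq_integral_of_forall_compl_eq_zero
      (hzero ξ' fun x => (hclose x).trans (min_le_left _ _))]
    refine (le_abs_self _).trans ((norm_setIntegral_le_of_norm_le_const hS.measure_lt_top
      fun x _ => hbound x).trans ?_)
    rw [Real.sq_sqrt (by positivity), div_mul_eq_mul_div, div_le_iff₀ (by positivity)]
    nlinarith

theorem norm11_nonneg (v : ℝ → ℝ) : 0 ≤ norm11 v :=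
  add_nonneg (add_nonneg (Real.iSup_nonneg fun _ => abs_nonneg _)
    (Real.iSup_nonneg fun _ => abs_nonneg _)) (Real.sqrt_nonneg _)

theorem bounds_of_norm11_lt {v v' : ℝ → ℝ} (hv : ∀ x, HasDerivAt v (v' x) x) {δ : ℝ}
    (hδ : norm11 v < δ) (hbdd : BddAbove (range fun x => |v' x|)) :
    (∀ x, |v' x| ≤ δ) ∧ ∫ x, v x ^ 2 ≤ δ ^ 2 ∧ ∫ x, v' x ^ 2 ≤ δ ^ 2 := by
  obtain rfl : deriv v = v' := funext fun x => (hv x).deriv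
  have hδ0 : 0 < δ := (norm11_nonneg v).trans_lt hδ
  have hsup0 : 0 ≤ ⨆ x, |v x| := Real.iSup_nonneg fun _ => abs_nonneg _
  have hsqrt := Real.sqrt_nonneg ((∫ x, v x ^ 2) + ∫ x, deriv v x ^ 2)
  unfold norm11 at hδ
  have hsum := (Real.sqrt_lt' hδ0).1
    (by linarith [Real.iSup_nonneg fun x => abs_nonneg (deriv v x)])
  have h0 : 0 ≤ ∫ x, v x ^ 2 := integral_nonneg fun _ => sq_nonneg _
  have h1 : 0 ≤ ∫ x, deriv v x ^ 2 := integral_nonneg fun _ => sq_nonneg _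
  refine ⟨fun x => ?_, by linarith, by linarith⟩
  linarith [le_ciSup hbdd x]

theorem norm11_le {v : ℝ → ℝ} {A B C D : ℝ} (hA : ∀ x, |v x| ≤ A) (hB : ∀ x, |deriv v x| ≤ B)
    (hC : ∫ x, v x ^ 2 ≤ C) (hD : ∫ x, deriv v x ^ 2 ≤ D) : norm11 v ≤ A + B + √(C + D) :=
  add_le_add (add_le_add (Real.iSup_le hA ((abs_nonneg _).trans (hA 0)))
    (Real.iSup_le hB ((abs_nonneg _).trans (hB 0)))) (Real.sqrt_le_sqrt (add_le_add hC hD))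

structure DiffeoBounds (η ξ : ℝ → ℝ) (a b : ℝ) : Prop where
  pos : 0 < a
  differentiable : Differentiable ℝ η
  le_deriv : ∀ x, a ≤ deriv η x
  deriv_le : ∀ x, deriv η x ≤ b
  leftInverse : Function.LeftInverse ξ η
  rightInverse : Function.RightInverse ξ η

namespace DiffeoBounds

variable {η ξ η₁ ξ₁ η₂ ξ₂ : ℝ → ℝ} {a b a₁ b₁ a₂ b₂ : ℝ}

theorem deriv_pos (h : DiffeoBounds η ξ a b) (x : ℝ) : 0 < deriv η x :=
  h.pos.trans_le (h.le_deriv x)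

theorem upper_pos (h : DiffeoBounds η ξ a b) : 0 < b :=
  (h.deriv_pos 0).trans_le (h.deriv_le 0)

theorem mul_abs_sub_le (h : DiffeoBounds η ξ a b) (x y : ℝ) : a * |x - y| ≤ |η x - η y| := by
  rcases le_total x y with hxy | hxy
  · have := mul_sub_le_image_sub_of_le_deriv h.differentiable h.le_deriv hxy
    rw [abs_sub_comm x, abs_sub_comm (η x), abs_of_nonneg (sub_nonneg.2 hxy)]
    exact this.trans (le_abs_self _)
  · have := mul_sub_le_image_sub_of_le_deriv h.differentiable h.le_deriv hxy
    rw [abs_of_nonneg (sub_nonneg.2 hxy)]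
    exact this.trans (le_abs_self _)

theorem continuous_inv (h : DiffeoBounds η ξ a b) : Continuous ξ := by
  refine (LipschitzWith.of_dist_le_mul (K := (a⁻¹).toNNReal) fun x y => ?_).continuous
  have := h.mul_abs_sub_le (ξ x) (ξ y)
  rw [h.rightInverse x, h.rightInverse y] at this
  rw [Real.dist_eq, Real.dist_eq, Real.coe_toNNReal _ (inv_nonneg.2 h.pos.le), inv_mul_eq_div,
    le_div_iff₀ h.pos, mul_comm]
  exact this

theorem hasDerivAt_inv (h : DiffeoBounds η ξ a b) (x : ℝ) :
    HasDerivAt ξ (deriv η (ξ x))⁻¹ x :=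
  (h.differentiable (ξ x)).hasDerivAt.of_local_left_inverse h.continuous_inv.continuousAt
    (h.deriv_pos _).ne' (Eventually.of_forall h.rightInverse)

theorem integral_comp_inv (h : DiffeoBounds η ξ a b) (f : ℝ → ℝ) :
    ∫ x, f (ξ x) = ∫ y, deriv η y * f y := by
  have := integral_image_eq_integral_abs_deriv_smul MeasurableSet.univ
    (fun x _ => (h.differentiable x).hasDerivAt.hasDerivWithinAt) h.leftInverse.injective.injOn
    (fun x => f (ξ x))
  rw [image_univ, h.rightInverse.surjective.range_eq] at this
  simpa [h.leftInverse _, abs_of_pos (h.deriv_pos _)] using this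

theorem integrable_comp_inv (h : DiffeoBounds η ξ a b) {f : ℝ → ℝ} (hf : Integrable f) :
    Integrable fun x => f (ξ x) := by
  have := integrableOn_image_iff_integrableOn_abs_deriv_smul MeasurableSet.univ
    (fun x _ => (h.differentiable x).hasDerivAt.hasDerivWithinAt) h.leftInverse.injective.injOn
    (fun x => f (ξ x))
  rw [image_univ, h.rightInverse.surjective.range_eq, integrableOn_univ, integrableOn_univ] at this
  refine this.2 ?_
  simp only [smul_eq_mul, h.leftInverse _]
  refine hf.bdd_mul (measurable_deriv η).abs.aestronglyMeasurable (c := b)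
    (Eventually.of_forall fun y => ?_)
  rw [Real.norm_eq_abs, abs_abs, abs_of_pos (h.deriv_pos _)]
  exact h.deriv_le y

theorem integral_comp_inv_le (h : DiffeoBounds η ξ a b) {f g : ℝ → ℝ} (hf : 0 ≤ f)
    (hfg : f ≤ g) (hg : Integrable g) : ∫ x, f (ξ x) ≤ b * ∫ y, g y := by
  rw [h.integral_comp_inv, ← integral_const_mul]
  refine integral_mono_of_nonneg (Eventually.of_forall fun y => ?_) (hg.const_mul b)
    (Eventually.of_forall fun y => ?_)
  · exact mul_nonneg (h.deriv_pos y).le (hf y)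
  · exact mul_le_mul (h.deriv_le y) (hfg y) (hf y) h.upper_pos.le

theorem mul_abs_inv_sub_inv_le (h₂ : DiffeoBounds η₂ ξ₂ a₂ b₂) (hr₁ : Function.RightInverse ξ₁ η₁)
    (x : ℝ) : a₂ * |ξ₁ x - ξ₂ x| ≤ |η₁ (ξ₁ x) - η₂ (ξ₁ x)| := by
  calc a₂ * |ξ₁ x - ξ₂ x| ≤ |η₂ (ξ₁ x) - η₂ (ξ₂ x)| := h₂.mul_abs_sub_le _ _
    _ = |η₁ (ξ₁ x) - η₂ (ξ₁ x)| := by rw [h₂.rightInverse x, hr₁ x, abs_sub_comm]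

theorem integral_sq_inv_sub_inv_le (h₁ : DiffeoBounds η₁ ξ₁ a₁ b₁)
    (h₂ : DiffeoBounds η₂ ξ₂ a₂ b₂) (hu : Integrable fun y => (η₁ y - η₂ y) ^ 2) :
    ∫ x, (ξ₁ x - ξ₂ x) ^ 2 ≤ b₁ / a₂ ^ 2 * ∫ y, (η₁ y - η₂ y) ^ 2 := by
  -- write the integrand as `f (ξ₁ x)` with `f y = (y - ξ₂ (η₁ y)) ^ 2`
  have hsubst : ∀ x, (ξ₁ x - ξ₂ x) ^ 2 = (ξ₁ x - ξ₂ (η₁ (ξ₁ x))) ^ 2 := fun x => by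
    rw [h₁.rightInverse x]
  simp_rw [hsubst]
  have hle : ∀ y, (y - ξ₂ (η₁ y)) ^ 2 ≤ (η₁ y - η₂ y) ^ 2 / a₂ ^ 2 := fun y => by
    have := h₂.mul_abs_inv_sub_inv_le h₁.rightInverse (η₁ y)
    rw [h₁.leftInverse y] at this
    rw [le_div_iff₀ (pow_pos h₂.pos 2), ← sq_abs, ← sq_abs (η₁ y - η₂ y), ← mul_pow, mul_comm]
    exact pow_le_pow_left₀ (mul_nonneg h₂.pos.le (abs_nonneg _)) this 2
  calc ∫ x, (ξ₁ x - ξ₂ (η₁ (ξ₁ x))) ^ 2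
      ≤ b₁ * ∫ y, (η₁ y - η₂ y) ^ 2 / a₂ ^ 2 :=
        h₁.integral_comp_inv_le (fun y => sq_nonneg _) hle (hu.div_const _)
    _ = b₁ / a₂ ^ 2 * ∫ y, (η₁ y - η₂ y) ^ 2 := by rw [integral_div]; ring

theorem abs_deriv_inv_sub_inv_le (h₁ : DiffeoBounds η₁ ξ₁ a₁ b₁)
    (h₂ : DiffeoBounds η₂ ξ₂ a₂ b₂) (x : ℝ) :
    |deriv (fun x => ξ₁ x - ξ₂ x) x| ≤
      (|deriv η₁ (ξ₁ x) - deriv η₁ (ξ₂ x)| + |deriv η₁ (ξ₂ x) - deriv η₂ (ξ₂ x)|) / (a₁ * a₂) := by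
  have hξ₁ := h₁.hasDerivAt_inv x
  have hξ₂ := h₂.hasDerivAt_inv x
  rw [deriv_fun_sub hξ₁.differentiableAt hξ₂.differentiableAt, hξ₁.deriv, hξ₂.deriv]
  refine (abs_inv_sub_inv_le h₁.pos (h₁.le_deriv _) h₂.pos (h₂.le_deriv _)).trans ?_
  gcongr
  · exact mul_nonneg h₁.pos.le h₂.pos.le
  · exact abs_sub_le _ _ _

theorem integral_sq_deriv_inv_sub_inv_le (h₁ : DiffeoBounds η₁ ξ₁ a₁ b₁)
    (h₂ : DiffeoBounds η₂ ξ₂ a₂ b₂)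
    (hQ : Integrable fun x => (deriv η₁ (ξ₁ x) - deriv η₁ (ξ₂ x)) ^ 2)
    (hdu : Integrable fun y => (deriv η₁ y - deriv η₂ y) ^ 2) :
    ∫ x, deriv (fun x => ξ₁ x - ξ₂ x) x ^ 2 ≤
      2 / (a₁ * a₂) ^ 2 * ((∫ x, (deriv η₁ (ξ₁ x) - deriv η₁ (ξ₂ x)) ^ 2) +
        b₂ * ∫ y, (deriv η₁ y - deriv η₂ y) ^ 2) := by
  have hpt : ∀ x, deriv (fun x => ξ₁ x - ξ₂ x) x ^ 2 ≤ 2 / (a₁ * a₂) ^ 2 *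
      ((deriv η₁ (ξ₁ x) - deriv η₁ (ξ₂ x)) ^ 2 + (deriv η₁ (ξ₂ x) - deriv η₂ (ξ₂ x)) ^ 2) := by
    intro x
    have ha : 0 < a₁ * a₂ := mul_pos h₁.pos h₂.pos
    have := pow_le_pow_left₀ (abs_nonneg _) (h₁.abs_deriv_inv_sub_inv_le h₂ x) 2
    rw [sq_abs, div_pow] at this
    refine this.trans ?_
    rw [div_mul_eq_mul_div, div_le_div_iff_of_pos_right (by positivity)]
    nlinarith [abs_nonneg (deriv η₁ (ξ₁ x) - deriv η₁ (ξ₂ x)),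
      abs_nonneg (deriv η₁ (ξ₂ x) - deriv η₂ (ξ₂ x)), sq_abs (deriv η₁ (ξ₁ x) - deriv η₁ (ξ₂ x)),
      sq_abs (deriv η₁ (ξ₂ x) - deriv η₂ (ξ₂ x)),
      sq_nonneg (|deriv η₁ (ξ₁ x) - deriv η₁ (ξ₂ x)| - |deriv η₁ (ξ₂ x) - deriv η₂ (ξ₂ x)|)]
  have hR := h₂.integrable_comp_inv hdu
  calc ∫ x, deriv (fun x => ξ₁ x - ξ₂ x) x ^ 2
      ≤ ∫ x, 2 / (a₁ * a₂) ^ 2 * ((deriv η₁ (ξ₁ x) - deriv η₁ (ξ₂ x)) ^ 2 +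
          (deriv η₁ (ξ₂ x) - deriv η₂ (ξ₂ x)) ^ 2) :=
        integral_mono_of_nonneg (Eventually.of_forall fun _ => sq_nonneg _)
          ((hQ.add hR).const_mul _) (Eventually.of_forall hpt)
    _ = 2 / (a₁ * a₂) ^ 2 * ((∫ x, (deriv η₁ (ξ₁ x) - deriv η₁ (ξ₂ x)) ^ 2) +
          ∫ x, (deriv η₁ (ξ₂ x) - deriv η₂ (ξ₂ x)) ^ 2) := by
        rw [integral_const_mul, integral_add hQ hR]
    _ ≤ _ := by
        gcongr
        exact h₂.integral_comp_inv_le (fun _ => sq_nonneg _) le_rfl hdu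

theorem exists_pos_integral_sq_comp_sub_le (h₁ : DiffeoBounds η₁ ξ₁ a₁ b₁) {w : ℝ → ℝ}
    (hwc : Continuous w) (hw : Integrable fun x => w x ^ 2) (b₂ : ℝ) {κ : ℝ} (hκ : 0 < κ) :
    ∃ ρ > 0, ∀ (η₂ ξ₂ : ℝ → ℝ) (a₂ : ℝ), DiffeoBounds η₂ ξ₂ a₂ b₂ → (∀ x, |ξ₁ x - ξ₂ x| ≤ ρ) →
      Integrable (fun x => (w (ξ₁ x) - w (ξ₂ x)) ^ 2) ∧ ∫ x, (w (ξ₁ x) - w (ξ₂ x)) ^ 2 ≤ κ := by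
  have hb₁ := h₁.upper_pos
  have hwL : MemLp w 2 := (memLp_two_iff_integrable_sq hwc.aestronglyMeasurable).2 hw
  set σ := κ / (6 * (b₁ + |b₂|))
  obtain ⟨g, hgs, hgI, hgc, hgL⟩ :=
    (ENNReal.ofReal_ofNat 2 ▸ hwL).exists_hasCompactSupport_integral_rpow_sub_le two_pos
      (show 0 < σ by positivity)
  simp only [Real.norm_eq_abs, Real.rpow_two, sq_abs] at hgI
  rw [ENNReal.ofReal_ofNat] at hgL
  have hwg := hwL.integrable_sq_sub hgL
  obtain ⟨ρ, hρ, hmid⟩ := exists_pos_integral_sq_comp_sub_le_of_hasCompactSupport hgc hgs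
    h₁.differentiable.continuous h₁.continuous_inv h₁.rightInverse (show 0 < κ / 6 by positivity)
  refine ⟨ρ, hρ, fun η₂ ξ₂ a₂ h₂ hclose => ?_⟩
  obtain ⟨hmidI, hmid⟩ := hmid ξ₂ h₂.continuous_inv hclose
  -- split `w = (w - g) + g`: the `w - g` parts are `L²`-small, the `g` part is `hmid`
  obtain ⟨hint, hle⟩ := integral_sq_le_of_eq_add_sub (f := fun x => w (ξ₁ x) - w (ξ₂ x))
    (p := fun x => w (ξ₁ x) - g (ξ₁ x)) (r := fun x => w (ξ₂ x) - g (ξ₂ x)) (fun x => by ring)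
    ((hwc.comp h₁.continuous_inv).sub (hwc.comp h₂.continuous_inv)).aestronglyMeasurable
    (h₁.integrable_comp_inv hwg) hmidI (h₂.integrable_comp_inv hwg)
  refine ⟨hint, hle.trans ?_⟩
  have h₁I := (h₁.integral_comp_inv_le (fun _ => sq_nonneg _) le_rfl hwg).trans
    (mul_le_mul_of_nonneg_left hgI hb₁.le)
  have h₂I := (h₂.integral_comp_inv_le (fun _ => sq_nonneg _) le_rfl hwg).trans
    (mul_le_mul (le_abs_self b₂) hgI (integral_nonneg fun _ => sq_nonneg _) (abs_nonneg b₂))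
  have hσ : 6 * (b₁ + |b₂|) * σ = κ := mul_div_cancel₀ _ (by positivity)
  linarith

theorem norm11_inv_sub_inv_le (h₁ : DiffeoBounds η₁ ξ₁ a₁ b₁) (h₂ : DiffeoBounds η₂ ξ₂ a₂ b₂)
    {s : ℝ} (hs : 0 ≤ s) (hu : ∀ x, |η₁ x - η₂ x| ≤ s)
    (hu2 : Integrable fun x => (η₁ x - η₂ x) ^ 2) (hIu : ∫ x, (η₁ x - η₂ x) ^ 2 ≤ s ^ 2)
    (hdu : ∀ x, |deriv η₁ x - deriv η₂ x| ≤ s)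
    (hdu2 : Integrable fun x => (deriv η₁ x - deriv η₂ x) ^ 2)
    (hIdu : ∫ x, (deriv η₁ x - deriv η₂ x) ^ 2 ≤ s ^ 2)
    (hω : ∀ x, |deriv η₁ (ξ₁ x) - deriv η₁ (ξ₂ x)| ≤ s)
    (hQ2 : Integrable fun x => (deriv η₁ (ξ₁ x) - deriv η₁ (ξ₂ x)) ^ 2)
    (hQ : ∫ x, (deriv η₁ (ξ₁ x) - deriv η₁ (ξ₂ x)) ^ 2 ≤ s ^ 2) :
    norm11 (fun x => ξ₁ x - ξ₂ x) ≤
      (1 / a₂ + 2 / (a₁ * a₂) + √(b₁ / a₂ ^ 2 + 2 / (a₁ * a₂) ^ 2 * (1 + b₂))) * s := by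
  have ha₂ := h₂.pos
  have ha := mul_pos h₁.pos ha₂
  have hb₁ := h₁.upper_pos
  have hb₂ := h₂.upper_pos
  have hsup : ∀ x, |ξ₁ x - ξ₂ x| ≤ s / a₂ := fun x => by
    rw [le_div_iff₀ ha₂, mul_comm]
    exact (h₂.mul_abs_inv_sub_inv_le h₁.rightInverse x).trans (hu _)
  have hsup' : ∀ x, |deriv (fun x => ξ₁ x - ξ₂ x) x| ≤ 2 * s / (a₁ * a₂) := fun x => by
    refine (h₁.abs_deriv_inv_sub_inv_le h₂ x).trans ?_
    gcongr
    linarith [hω x, hdu (ξ₂ x)]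
  have hL2 : ∫ x, (ξ₁ x - ξ₂ x) ^ 2 ≤ b₁ / a₂ ^ 2 * s ^ 2 :=
    (h₁.integral_sq_inv_sub_inv_le h₂ hu2).trans (by gcongr)
  have hL2' : ∫ x, deriv (fun x => ξ₁ x - ξ₂ x) x ^ 2 ≤ 2 / (a₁ * a₂) ^ 2 * (s ^ 2 + b₂ * s ^ 2) :=
    (h₁.integral_sq_deriv_inv_sub_inv_le h₂ hQ2 hdu2).trans (by gcongr)
  refine (norm11_le hsup hsup' hL2 hL2').trans (le_of_eq ?_)
  rw [show b₁ / a₂ ^ 2 * s ^ 2 + 2 / (a₁ * a₂) ^ 2 * (s ^ 2 + b₂ * s ^ 2) =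
      (b₁ / a₂ ^ 2 + 2 / (a₁ * a₂) ^ 2 * (1 + b₂)) * s ^ 2 by ring,
    Real.sqrt_mul' _ (sq_nonneg s), Real.sqrt_sq hs]
  ring

end DiffeoBounds

section InD

variable {η ξ η₁ ξ₁ η₂ ξ₂ : ℝ → ℝ} {a b a₁ b₁ a₂ b₂ : ℝ}

theorem InD.diffeoBounds (h : InD η a b) (ha : 0 < a)
    (hl : Function.LeftInverse ξ η) (hr : Function.RightInverse ξ η) : DiffeoBounds η ξ a b :=
  ⟨ha, h.1.differentiable one_ne_zero, fun x => (h.2.1 x).1, fun x => (h.2.1 x).2, hl, hr⟩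

theorem InD.memLp_sub_id (h : InD η a b) : MemLp (fun x => η x - x) 2 :=
  (memLp_two_iff_integrable_sq (h.1.continuous.sub continuous_id).aestronglyMeasurable).2 h.2.2.1

theorem InD.memLp_deriv_sub_one (h : InD η a b) :
    MemLp (fun x => deriv η x - 1) 2 :=
  (memLp_two_iff_integrable_sq
    ((measurable_deriv η).sub measurable_const).aestronglyMeasurable).2 h.2.2.2.1

theorem InD.integrable_sq_sub (hη₁ : InD η₁ a₁ b₁) (hη₂ : InD η₂ a₂ b₂) :
    (Integrable fun x => (η₁ x - η₂ x) ^ 2) ∧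
      Integrable fun x => (deriv η₁ x - deriv η₂ x) ^ 2 := by
  constructor
  · simpa using hη₁.memLp_sub_id.integrable_sq_sub hη₂.memLp_sub_id
  · simpa using hη₁.memLp_deriv_sub_one.integrable_sq_sub hη₂.memLp_deriv_sub_one

theorem InD.bounds_of_norm11_sub_lt (hη₁ : InD η₁ a₁ b₁) (ha₁ : 0 < a₁) (hη₂ : InD η₂ a₂ b₂)
    (hl₂ : Function.LeftInverse ξ₂ η₂) (hr₂ : Function.RightInverse ξ₂ η₂) {δ : ℝ}
    (hδ : norm11 (fun x => η₁ x - η₂ x) < δ) (hδa : δ ≤ a₁ / 2) (hδ1 : δ ≤ 1) :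
    DiffeoBounds η₂ ξ₂ (a₁ / 2) (b₁ + 1) ∧ (∀ x, |η₁ x - η₂ x| ≤ 2 * δ) ∧
      (∀ x, |deriv η₁ x - deriv η₂ x| ≤ δ) ∧ ∫ x, (η₁ x - η₂ x) ^ 2 ≤ δ ^ 2 ∧
      ∫ x, (deriv η₁ x - deriv η₂ x) ^ 2 ≤ δ ^ 2 := by
  have hd₁ := hη₁.1.differentiable one_ne_zero
  have hd₂ := hη₂.1.differentiable one_ne_zero
  have hu' : ∀ x, HasDerivAt (fun x => η₁ x - η₂ x) (deriv η₁ x - deriv η₂ x) x := fun x =>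
    (hd₁ x).hasDerivAt.sub (hd₂ x).hasDerivAt
  have hbdd : BddAbove (range fun x => |deriv η₁ x - deriv η₂ x|) := by
    refine ⟨|a₁| + |b₁| + (|a₂| + |b₂|), ?_⟩
    rintro _ ⟨x, rfl⟩
    have h₁x := hη₁.2.1 x
    have h₂x := hη₂.2.1 x
    exact abs_le.2 ⟨by linarith [le_abs_self b₂, neg_abs_le a₁, abs_nonneg a₂, abs_nonneg b₁],
      by linarith [le_abs_self b₁, neg_abs_le a₂, abs_nonneg a₁, abs_nonneg b₂]⟩
  obtain ⟨hdu, hIu, hIdu⟩ := bounds_of_norm11_lt hu' hδ hbdd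
  have hδ0 : 0 ≤ δ := (norm11_nonneg _).trans hδ.le
  refine ⟨⟨half_pos ha₁, hd₂, fun x => ?_, fun x => ?_, hl₂, hr₂⟩, fun x => ?_, hdu, hIu, hIdu⟩
  · linarith [(abs_le.1 (hdu x)).2, (hη₁.2.1 x).1]
  · linarith [(abs_le.1 (hdu x)).1, (hη₁.2.1 x).2]
  · rw [two_mul]
    exact abs_le_of_integral_sq_le hu' (hη₁.integrable_sq_sub hη₂).1 hδ0 hIu hdu x

theorem InD.exists_pos_deriv_comp_inv_sub_le (hη₁ : InD η₁ a₁ b₁)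
    (h₁ : DiffeoBounds η₁ ξ₁ a₁ b₁) (b₂ : ℝ) {s : ℝ} (hs : 0 < s) :
    ∃ ρ > 0, ∀ (η₂ ξ₂ : ℝ → ℝ) (a₂ : ℝ), DiffeoBounds η₂ ξ₂ a₂ b₂ → (∀ x, |ξ₁ x - ξ₂ x| ≤ ρ) →
      (∀ x, |deriv η₁ (ξ₁ x) - deriv η₁ (ξ₂ x)| ≤ s) ∧
      (Integrable fun x => (deriv η₁ (ξ₁ x) - deriv η₁ (ξ₂ x)) ^ 2) ∧
      ∫ x, (deriv η₁ (ξ₁ x) - deriv η₁ (ξ₂ x)) ^ 2 ≤ s ^ 2 := by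
  have hη₁' : Continuous (deriv η₁) := hη₁.1.continuous_deriv le_rfl
  obtain ⟨ρ₁, hρ₁, hmod⟩ := Metric.uniformContinuous_iff.1
    (hη₁'.uniformContinuous_of_tendsto_cocompact hη₁.2.2.2.2) s hs
  obtain ⟨ρ₂, hρ₂, hL2⟩ := h₁.exists_pos_integral_sq_comp_sub_le (w := fun x => deriv η₁ x - 1)
    (hη₁'.sub continuous_const) hη₁.2.2.2.1 b₂ (pow_pos hs 2)
  refine ⟨min (ρ₁ / 2) ρ₂, by positivity, fun η₂ ξ₂ a₂ h₂ hclose => ⟨fun x => ?_, ?_⟩⟩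
  · rw [← Real.dist_eq]
    exact (hmod (by rw [Real.dist_eq]; linarith [hclose x, min_le_left (ρ₁ / 2) ρ₂])).le
  · simpa using hL2 η₂ ξ₂ a₂ h₂ fun x => (hclose x).trans (min_le_right _ _)

end InD

theorem inversion_continuous_general (η₁ ξ₁ : ℝ → ℝ) (a₁ b₁ : ℝ) (ha₁ : 0 < a₁)
    (hη₁ : InD η₁ a₁ b₁)
    (hl₁ : Function.LeftInverse ξ₁ η₁) (hr₁ : Function.RightInverse ξ₁ η₁)
    (ε : ℝ) (hε : 0 < ε) :
    ∃ δ : ℝ, 0 < δ ∧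
      ∀ (η₂ ξ₂ : ℝ → ℝ) (a₂ b₂ : ℝ), 0 < a₂ → a₂ < b₂ → InD η₂ a₂ b₂ →
        Function.LeftInverse ξ₂ η₂ → Function.RightInverse ξ₂ η₂ →
        norm11 (fun x => η₁ x - η₂ x) < δ →
        norm11 (fun x => ξ₁ x - ξ₂ x) < ε := by
  have h₁ := hη₁.diffeoBounds ha₁ hl₁ hr₁
  -- the constant of `norm11_inv_sub_inv_le` for `a₂ = a₁ / 2`, `b₂ = b₁ + 1`
  set K := 1 / (a₁ / 2) + 2 / (a₁ * (a₁ / 2)) +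
    √(b₁ / (a₁ / 2) ^ 2 + 2 / (a₁ * (a₁ / 2)) ^ 2 * (1 + (b₁ + 1)))
  set s := ε / (K + 1)
  have hs : 0 < s := by positivity
  obtain ⟨ρ, hρ, hmod⟩ := hη₁.exists_pos_deriv_comp_inv_sub_le h₁ (b₁ + 1) hs
  refine ⟨min (min (a₁ / 2) 1) (min (s / 2) (a₁ * ρ / 4)), by positivity, ?_⟩
  intro η₂ ξ₂ a₂ b₂ _ _ hη₂ hl₂ hr₂ hnorm
  set δ := min (min (a₁ / 2) 1) (min (s / 2) (a₁ * ρ / 4))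
  have hδs : δ ≤ s / 2 := (min_le_right _ _).trans (min_le_left _ _)
  have hδρ : δ ≤ a₁ * ρ / 4 := (min_le_right _ _).trans (min_le_right _ _)
  obtain ⟨h₂, hu, hdu, hIu, hIdu⟩ := hη₁.bounds_of_norm11_sub_lt ha₁ hη₂ hl₂ hr₂ hnorm
    ((min_le_left _ _).trans (min_le_left _ _)) ((min_le_left _ _).trans (min_le_right _ _))
  have hclose : ∀ x, |ξ₁ x - ξ₂ x| ≤ ρ := fun x => le_of_mul_le_mul_left
    (by linarith [h₂.mul_abs_inv_sub_inv_le hr₁ x, hu (ξ₁ x)]) (half_pos ha₁)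
  obtain ⟨hω, hQ2, hQ⟩ := hmod η₂ ξ₂ _ h₂ hclose
  obtain ⟨hu2, hdu2⟩ := hη₁.integrable_sq_sub hη₂
  have hδs2 : δ ^ 2 ≤ s ^ 2 := by gcongr; linarith
  refine (h₁.norm11_inv_sub_inv_le h₂ hs.le (fun x => (hu x).trans (by linarith)) hu2
    (hIu.trans hδs2) (fun x => (hdu x).trans (by linarith)) hdu2 (hIdu.trans hδs2) hω hQ2
    hQ).trans_lt (?_ : K * s < ε)
  have hK : 0 ≤ K := by positivity
  rw [mul_div_assoc', div_lt_iff₀ (by positivity)]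
  linarith

/-- The inversion map `η ↦ η⁻¹` on `𝒟(ℝ)` is continuous for the distance
`D(η, ζ) = ‖η − ζ‖_{1,1}`. -/
theorem inversion_continuous (η₁ ξ₁ : ℝ → ℝ) (a₁ b₁ : ℝ) (ha₁ : 0 < a₁) (hab₁ : a₁ < b₁)
    (hη₁ : InD η₁ a₁ b₁)
    (hl₁ : Function.LeftInverse ξ₁ η₁) (hr₁ : Function.RightInverse ξ₁ η₁)
    (ε : ℝ) (hε : 0 < ε) :
    ∃ δ : ℝ, 0 < δ ∧
      ∀ (η₂ ξ₂ : ℝ → ℝ) (a₂ b₂ : ℝ), 0 < a₂ → a₂ < b₂ → InD η₂ a₂ b₂ →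
        Function.LeftInverse ξ₂ η₂ → Function.RightInverse ξ₂ η₂ →
        norm11 (fun x => η₁ x - η₂ x) < δ →
        norm11 (fun x => ξ₁ x - ξ₂ x) < ε :=
  inversion_continuous_general η₁ ξ₁ a₁ b₁ ha₁ hη₁ hl₁ hr₁ ε hε
end

section
/- Let η₁, η₂ ∈ 𝒟(ℝ) with a₁ ≤ η₁'(x) for all x (a₁ > 0) and η₂'(x) ≤ b₂ for all x, and let ξ₁ = η₁⁻¹, ξ₂ = η₂⁻¹ be their inverses. Then ∫_ℝ |ξ₁(x) − ξ₂(x)|² dx ≤ (b₂/a₁²) ∫_ℝ |η₁(y) − η₂(y)|² dy. -/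
open Filter MeasureTheory

/-!
Substituting `x = η₂ y` turns the left-hand side into `∫ η₂'(y) (ξ₁(η₂ y) - y)² dy`. Since
`y = ξ₁(η₁ y)` and `η₁' ≥ a₁` makes `ξ₁` Lipschitz with constant `1/a₁`, the integrand is at most
`b₂ · (η₂ y - η₁ y)² / a₁²`.
-/

open Function

theorem antilipschitzWith_of_le_deriv {f : ℝ → ℝ} (hf : Differentiable ℝ f) {a : ℝ} (ha : 0 < a)
    (hle : ∀ x, a ≤ deriv f x) : AntilipschitzWith (Real.toNNReal a⁻¹) f := by
  refine AntilipschitzWith.of_le_mul_dist fun x y => ?_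
  have hgrowth : a * |x - y| ≤ |f x - f y| := by
    rcases le_total x y with hxy | hyx
    · rw [abs_sub_comm x, abs_sub_comm (f x), abs_of_nonneg (sub_nonneg.2 hxy)]
      exact (mul_sub_le_image_sub_of_le_deriv hf hle hxy).trans (le_abs_self _)
    · rw [abs_of_nonneg (sub_nonneg.2 hyx)]
      exact (mul_sub_le_image_sub_of_le_deriv hf hle hyx).trans (le_abs_self _)
  rw [Real.dist_eq, Real.dist_eq, Real.coe_toNNReal _ (inv_nonneg.2 ha.le),
    inv_mul_eq_div, le_div_iff₀ ha, mul_comm]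
  exact hgrowth

theorem LipschitzWith.sq_sub_le {f : ℝ → ℝ} {K : NNReal} (hf : LipschitzWith K f) (x y : ℝ) :
    (f x - f y) ^ 2 ≤ (K : ℝ) ^ 2 * (x - y) ^ 2 := by
  have h := hf.dist_le_mul x y
  rw [Real.dist_eq, Real.dist_eq] at h
  rw [← sq_abs (f x - f y), ← sq_abs (x - y), ← mul_pow]
  exact pow_le_pow_left₀ (abs_nonneg _) h 2

theorem integral_eq_integral_abs_deriv_smul_comp {E : Type*} [NormedAddCommGroup E]
    [NormedSpace ℝ E] {f f' : ℝ → ℝ} (hf : ∀ x, HasDerivAt f (f' x) x) (hinj : Injective f)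
    (hsurj : Surjective f) (g : ℝ → E) : ∫ x, g x = ∫ x, |f' x| • g (f x) := by
  have h := integral_image_eq_integral_abs_deriv_smul MeasurableSet.univ
    (fun x _ => (hf x).hasDerivWithinAt) hinj.injOn g
  rwa [Set.image_univ, hsurj.range_eq, setIntegral_univ, setIntegral_univ] at h

theorem integrable_sq_sub_of_integrable_sq_sub {α : Type*} [MeasurableSpace α] {μ : Measure α}
    {f g h : α → ℝ} (hfm : AEStronglyMeasurable (fun x => f x - h x) μ)
    (hgm : AEStronglyMeasurable (fun x => g x - h x) μ)
    (hf : Integrable (fun x => (f x - h x) ^ 2) μ) (hg : Integrable (fun x => (g x - h x) ^ 2) μ) :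
    Integrable (fun x => (f x - g x) ^ 2) μ := by
  have hdiff := ((memLp_two_iff_integrable_sq hfm).2 hf).sub ((memLp_two_iff_integrable_sq hgm).2 hg)
  simpa only [Pi.sub_apply, sub_sub_sub_cancel_right] using hdiff.integrable_sq

theorem inverse_L2_diff_bound_general (η₁ η₂ ξ₁ ξ₂ : ℝ → ℝ) (a₁ b₁ a₂ b₂ : ℝ)
    (ha₁ : 0 < a₁) (ha₂ : 0 < a₂)
    (hη₁ : InD η₁ a₁ b₁) (hη₂ : InD η₂ a₂ b₂)
    (hl₁ : Function.LeftInverse ξ₁ η₁) (hr₁ : Function.RightInverse ξ₁ η₁)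
    (hl₂ : Function.LeftInverse ξ₂ η₂) (hr₂ : Function.RightInverse ξ₂ η₂) :
    ∫ x : ℝ, (ξ₁ x - ξ₂ x) ^ 2 ≤ (b₂ / a₁ ^ 2) * ∫ y : ℝ, (η₁ y - η₂ y) ^ 2 := by
  obtain ⟨hc₁, hd₁, hi₁, -, -⟩ := hη₁
  obtain ⟨hc₂, hd₂, hi₂, -, -⟩ := hη₂
  have hdiff₂ : Differentiable ℝ η₂ := hc₂.differentiable one_ne_zero
  have hξ₁ : LipschitzWith (Real.toNNReal a₁⁻¹) ξ₁ :=
    (antilipschitzWith_of_le_deriv (hc₁.differentiable one_ne_zero) ha₁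
      (fun x => (hd₁ x).1)).to_rightInverse hr₁
  have hint : Integrable (fun y => (η₁ y - η₂ y) ^ 2) :=
    integrable_sq_sub_of_integrable_sq_sub (hc₁.continuous.sub continuous_id).aestronglyMeasurable
      (hc₂.continuous.sub continuous_id).aestronglyMeasurable hi₁ hi₂
  rw [integral_eq_integral_abs_deriv_smul_comp (fun y => (hdiff₂ y).hasDerivAt) hl₂.injective
    hr₂.surjective, ← integral_const_mul]
  refine integral_mono_of_nonneg (ae_of_all _ fun y => by positivity) (hint.const_mul _)
    (ae_of_all _ fun y => ?_)
  have hb : |deriv η₂ y| ≤ b₂ := by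
    rw [abs_of_pos (ha₂.trans_le (hd₂ y).1)]
    exact (hd₂ y).2
  have hlip := hξ₁.sq_sub_le (η₂ y) (η₁ y)
  rw [hl₁ y, Real.coe_toNNReal _ (inv_nonneg.2 ha₁.le)] at hlip
  calc |deriv η₂ y| • (ξ₁ (η₂ y) - ξ₂ (η₂ y)) ^ 2
      ≤ b₂ * (a₁⁻¹ ^ 2 * (η₂ y - η₁ y) ^ 2) := by
        rw [hl₂ y, smul_eq_mul]
        exact mul_le_mul hb hlip (sq_nonneg _) ((abs_nonneg _).trans hb)
    _ = b₂ / a₁ ^ 2 * (η₁ y - η₂ y) ^ 2 := by ring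

/-- For `η₁, η₂ ∈ 𝒟(ℝ)` with `a₁ ≤ η₁'`, `η₂' ≤ b₂` and inverses `ξ₁, ξ₂`:
`∫ |ξ₁(x) − ξ₂(x)|² dx ≤ (b₂/a₁²) ∫ |η₁(y) − η₂(y)|² dy`. -/
theorem inverse_L2_diff_bound (η₁ η₂ ξ₁ ξ₂ : ℝ → ℝ) (a₁ b₁ a₂ b₂ : ℝ)
    (ha₁ : 0 < a₁) (hab₁ : a₁ < b₁) (ha₂ : 0 < a₂) (hab₂ : a₂ < b₂)
    (hη₁ : InD η₁ a₁ b₁) (hη₂ : InD η₂ a₂ b₂)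
    (hl₁ : Function.LeftInverse ξ₁ η₁) (hr₁ : Function.RightInverse ξ₁ η₁)
    (hl₂ : Function.LeftInverse ξ₂ η₂) (hr₂ : Function.RightInverse ξ₂ η₂) :
    ∫ x : ℝ, (ξ₁ x - ξ₂ x) ^ 2 ≤ (b₂ / a₁ ^ 2) * ∫ y : ℝ, (η₁ y - η₂ y) ^ 2 :=
  inverse_L2_diff_bound_general η₁ η₂ ξ₁ ξ₂ a₁ b₁ a₂ b₂ ha₁ ha₂ hη₁ hη₂ hl₁ hr₁ hl₂ hr₂
end

section
/- Let η₁, η₂ ∈ 𝒟(ℝ) with a₁ ≤ η₁'(x) and a₂ ≤ η₂'(x) for all x (a₁, a₂ > 0), let ξ₁ = η₁⁻¹, ξ₂ = η₂⁻¹ be their inverses, and let ω₁ : [0,∞) → [0,∞) be a nondecreasing function such that |η₁'(x) − η₁'(y)| ≤ ω₁(|x − y|) for all x, y ∈ ℝ. Then for every x ∈ ℝ, |ξ₁'(x) − ξ₂'(x)| ≤ (1/(a₁ a₂)) ( ω₁(|ξ₁(x) − ξ₂(x)|) + sup_{z∈ℝ} |η₁'(z) − η₂'(z)| ). -/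
/-! Since `ξᵢ' = 1 / (ηᵢ' ∘ ξᵢ)`, the difference `ξ₁'(x) - ξ₂'(x)` equals
`(η₂'(ξ₂ x) - η₁'(ξ₁ x)) / (η₁'(ξ₁ x) η₂'(ξ₂ x))`; the denominator is at least `a₁ a₂`, and the
numerator is split through `η₁'(ξ₂ x)` into a modulus-of-continuity term and a sup term. -/

open Filter MeasureTheory

open Function Set

theorem deriv_eq_inv_deriv_comp_of_inverse {η ξ : ℝ → ℝ} (hd : Differentiable ℝ η)
    (hpos : ∀ x, 0 < deriv η x) (hl : LeftInverse ξ η) (hr : RightInverse ξ η) (x : ℝ) :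
    deriv ξ x = (deriv η (ξ x))⁻¹ := by
  have hη : StrictMono η := strictMono_of_deriv_pos hpos
  have hξ : Monotone ξ := fun u v huv => hη.le_iff_le.mp (by rwa [hr u, hr v])
  have hcont : Continuous ξ := hξ.continuous_of_surjective hl.surjective
  exact (HasDerivAt.of_local_left_inverse hcont.continuousAt (hd _).hasDerivAt (hpos _).ne'
    (.of_forall hr)).deriv

theorem abs_inv_sub_inv_le_div {a b A B : ℝ} (ha : 0 < a) (hb : 0 < b) (hA : a ≤ A)
    (hB : b ≤ B) : |A⁻¹ - B⁻¹| ≤ |A - B| / (a * b) := by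
  have hA₀ : 0 < A := ha.trans_le hA
  rw [inv_sub_inv hA₀.ne' (hb.trans_le hB).ne', abs_div, abs_sub_comm,
    abs_of_pos (mul_pos hA₀ (hb.trans_le hB))]
  exact div_le_div_of_nonneg_left (abs_nonneg _) (mul_pos ha hb) (mul_le_mul hA hB hb.le hA₀.le)

theorem bddAbove_range_abs_sub {α : Type*} {f g : α → ℝ} {a₁ b₁ a₂ b₂ : ℝ}
    (hf : ∀ z, a₁ ≤ f z ∧ f z ≤ b₁) (hg : ∀ z, a₂ ≤ g z ∧ g z ≤ b₂) :
    BddAbove (range fun z => |f z - g z|) := by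
  refine ⟨max (b₁ - a₂) (b₂ - a₁), ?_⟩
  rintro _ ⟨z, rfl⟩
  exact abs_sub_le_iff.2 ⟨le_max_of_le_left (by linarith [hf z, hg z]),
    le_max_of_le_right (by linarith [hf z, hg z])⟩

theorem abs_sub_le_modulus_add_iSup {f g ω : ℝ → ℝ} (hω : ∀ x y, |f x - f y| ≤ ω |x - y|)
    (hbdd : BddAbove (range fun z => |f z - g z|)) (x y : ℝ) :
    |f x - g y| ≤ ω |x - y| + ⨆ z, |f z - g z| :=
  calc |f x - g y| ≤ |f x - f y| + |f y - g y| := abs_sub_le _ _ _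
    _ ≤ ω |x - y| + ⨆ z, |f z - g z| := add_le_add (hω x y) (le_ciSup hbdd y)

theorem inverse_deriv_sup_bound_general (η₁ η₂ ξ₁ ξ₂ : ℝ → ℝ) (a₁ b₁ a₂ b₂ : ℝ)
    (ha₁ : 0 < a₁) (ha₂ : 0 < a₂)
    (hη₁ : InD η₁ a₁ b₁) (hη₂ : InD η₂ a₂ b₂)
    (hl₁ : Function.LeftInverse ξ₁ η₁) (hr₁ : Function.RightInverse ξ₁ η₁)
    (hl₂ : Function.LeftInverse ξ₂ η₂) (hr₂ : Function.RightInverse ξ₂ η₂)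
    (ω₁ : ℝ → ℝ)
    (hω₁ : ∀ x y : ℝ, |deriv η₁ x - deriv η₁ y| ≤ ω₁ |x - y|) :
    ∀ x : ℝ, |deriv ξ₁ x - deriv ξ₂ x| ≤
      (1 / (a₁ * a₂)) * (ω₁ |ξ₁ x - ξ₂ x| + ⨆ z : ℝ, |deriv η₁ z - deriv η₂ z|) := by
  intro x
  obtain ⟨hC₁, hbd₁, -⟩ := hη₁
  obtain ⟨hC₂, hbd₂, -⟩ := hη₂
  rw [deriv_eq_inv_deriv_comp_of_inverse (hC₁.differentiable one_ne_zero)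
      (fun z => ha₁.trans_le (hbd₁ z).1) hl₁ hr₁ x,
    deriv_eq_inv_deriv_comp_of_inverse (hC₂.differentiable one_ne_zero)
      (fun z => ha₂.trans_le (hbd₂ z).1) hl₂ hr₂ x, one_div_mul_eq_div]
  calc |(deriv η₁ (ξ₁ x))⁻¹ - (deriv η₂ (ξ₂ x))⁻¹|
      ≤ |deriv η₁ (ξ₁ x) - deriv η₂ (ξ₂ x)| / (a₁ * a₂) :=
        abs_inv_sub_inv_le_div ha₁ ha₂ (hbd₁ _).1 (hbd₂ _).1
    _ ≤ (ω₁ |ξ₁ x - ξ₂ x| + ⨆ z : ℝ, |deriv η₁ z - deriv η₂ z|) / (a₁ * a₂) :=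
        div_le_div_of_nonneg_right
          (abs_sub_le_modulus_add_iSup hω₁ (bddAbove_range_abs_sub hbd₁ hbd₂) _ _)
          (mul_pos ha₁ ha₂).le

/-- For `η₁, η₂ ∈ 𝒟(ℝ)` with inverses `ξ₁, ξ₂` and a modulus of continuity `ω₁` for `η₁'`:
`|ξ₁'(x) − ξ₂'(x)| ≤ (1/(a₁ a₂)) (ω₁(|ξ₁(x) − ξ₂(x)|) + sup_z |η₁'(z) − η₂'(z)|)`. -/
theorem inverse_deriv_sup_bound (η₁ η₂ ξ₁ ξ₂ : ℝ → ℝ) (a₁ b₁ a₂ b₂ : ℝ)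
    (ha₁ : 0 < a₁) (hab₁ : a₁ < b₁) (ha₂ : 0 < a₂) (hab₂ : a₂ < b₂)
    (hη₁ : InD η₁ a₁ b₁) (hη₂ : InD η₂ a₂ b₂)
    (hl₁ : Function.LeftInverse ξ₁ η₁) (hr₁ : Function.RightInverse ξ₁ η₁)
    (hl₂ : Function.LeftInverse ξ₂ η₂) (hr₂ : Function.RightInverse ξ₂ η₂)
    (ω₁ : ℝ → ℝ) (hω₁nonneg : ∀ s : ℝ, 0 ≤ s → 0 ≤ ω₁ s)
    (hω₁mono : ∀ s t : ℝ, 0 ≤ s → s ≤ t → ω₁ s ≤ ω₁ t)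
    (hω₁ : ∀ x y : ℝ, |deriv η₁ x - deriv η₁ y| ≤ ω₁ |x - y|) :
    ∀ x : ℝ, |deriv ξ₁ x - deriv ξ₂ x| ≤
      (1 / (a₁ * a₂)) * (ω₁ |ξ₁ x - ξ₂ x| + ⨆ z : ℝ, |deriv η₁ z - deriv η₂ z|) :=
  inverse_deriv_sup_bound_general η₁ η₂ ξ₁ ξ₂ a₁ b₁ a₂ b₂ ha₁ ha₂ hη₁ hη₂ hl₁ hr₁ hl₂ hr₂ ω₁ hω₁
end

section
/- Let g : ℝ → ℝ be continuous and bounded, and let f : ℝ → ℝ be twice continuously differentiable with f(x) − f''(x) = g(x) for all x ∈ ℝ and f(x) → 0 as |x| → ∞. Then f(x) = (1/2) ∫_ℝ e^{−|x−y|} g(y) dy for every x ∈ ℝ. -/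
/-!
On `(-∞, x]` the function `e^{y-x} (f - f')` is a primitive of `e^{y-x} (f - f'') = e^{-|x-y|} g`,
and on `[x, ∞)` so is `e^{x-y} (-f - f')`, the mirror image under `y ↦ -y`. Integrating gives
`f x - f' x` and `f x + f' x`, which add up to `2 f x`. The boundary terms vanish because `f → 0`
and `f'` grows at most linearly: `f'' = f - g` is bounded, `f` being a `C₀` function.
-/

open Filter MeasureTheory Set Real Topology

theorem integrable_exp_neg_abs : Integrable fun y : ℝ => exp (-|y|) := by
  rw [← integrableOn_univ, ← Iic_union_Ioi (a := 0), integrableOn_union]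
  constructor
  · refine (integrableOn_exp_Iic 0).congr_fun (fun y hy => ?_) measurableSet_Iic
    rw [abs_of_nonpos hy, neg_neg]
  · refine (integrableOn_exp_neg_Ioi 0).congr_fun (fun y hy => ?_) measurableSet_Ioi
    rw [abs_of_pos hy]

theorem integrable_exp_neg_abs_sub_mul {g : ℝ → ℝ} (hg : AEStronglyMeasurable g) {C : ℝ}
    (hgb : ∀ y, |g y| ≤ C) (x : ℝ) : Integrable fun y => exp (-|x - y|) * g y :=
  (integrable_exp_neg_abs.comp_sub_left x).mul_bdd hg (ae_of_all _ hgb)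

theorem abs_le_abs_add_mul_abs_of_abs_deriv_le {h h' : ℝ → ℝ} {B : ℝ}
    (hh : ∀ y, HasDerivAt h (h' y) y) (hB : ∀ y, |h' y| ≤ B) (y : ℝ) :
    |h y| ≤ |h 0| + B * |y| := by
  have := convex_univ.norm_image_sub_le_of_norm_hasDerivWithin_le
    (fun z _ => (hh z).hasDerivWithinAt) (fun z _ => hB z) (mem_univ 0) (mem_univ y)
  rw [Real.norm_eq_abs, Real.norm_eq_abs, sub_zero] at this
  linarith [abs_sub_abs_le_abs_sub (h y) (h 0)]

theorem tendsto_exp_mul_atBot_of_abs_le {h : ℝ → ℝ} {a b : ℝ}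
    (hh : ∀ y, |h y| ≤ a + b * |y|) :
    Tendsto (fun y => exp y * h y) atBot (𝓝 0) := by
  have hexp : Tendsto (fun y => exp y * (a + b * |y|)) atBot (𝓝 0) := by
    have habs_mul_exp : Tendsto (fun y => |y| * exp y) atBot (𝓝 0) := by
      have := (tendsto_pow_mul_exp_neg_atTop_nhds_zero 1).comp tendsto_neg_atBot_atTop
      refine this.congr' ?_
      filter_upwards [eventually_le_atBot 0] with y hy
      simp [abs_of_nonpos hy]
    simpa using ((tendsto_exp_atBot.mul_const a).add (habs_mul_exp.const_mul b)).congr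
      fun y => by ring
  refine squeeze_zero_norm (fun y => ?_) hexp
  rw [Real.norm_eq_abs, abs_mul, abs_of_pos (exp_pos y)]
  exact mul_le_mul_of_nonneg_left (hh y) (exp_pos y).le

section
variable {f f' f'' g : ℝ → ℝ}

theorem integral_Iic_exp_neg_abs_sub_mul (hf : ∀ y, HasDerivAt f (f' y) y)
    (hf' : ∀ y, HasDerivAt f' (f'' y) y) (hfg : ∀ y, f y - f'' y = g y)
    (hf_atBot : Tendsto f atBot (𝓝 0))
    (hf'_atBot : Tendsto (fun y => exp y * f' y) atBot (𝓝 0))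
    (x : ℝ) (hint : IntegrableOn (fun y => exp (-|x - y|) * g y) (Iic x)) :
    ∫ y in Iic x, exp (-|x - y|) * g y = f x - f' x := by
  have hderiv (y : ℝ) :
      HasDerivAt (fun y => exp (y - x) * (f y - f' y)) (exp (y - x) * g y) y := by
    have hexp : HasDerivAt (fun y => exp (y - x)) (exp (y - x)) y := by
      simpa using ((hasDerivAt_id y).sub_const x).exp
    refine (hexp.mul ((hf y).sub (hf' y))).congr_deriv ?_
    rw [Pi.sub_apply, ← hfg y]; ring
  have hlim : Tendsto (fun y => exp (y - x) * (f y - f' y)) atBot (𝓝 0) := by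
    have := ((tendsto_exp_atBot.mul hf_atBot).sub hf'_atBot).const_mul (exp (-x))
    simp only [mul_zero, sub_zero] at this
    refine this.congr fun y => ?_
    rw [sub_eq_neg_add y x, exp_add]; ring
  have := integral_Iic_of_hasDerivAt_of_tendsto (hderiv x).continuousAt.continuousWithinAt
    (fun y (hy : y < x) => ?_) hint hlim
  · simpa using this
  · rw [abs_of_pos (sub_pos.2 hy), neg_sub]
    exact hderiv y

theorem integral_Ioi_exp_neg_abs_sub_mul (hf : ∀ y, HasDerivAt f (f' y) y)
    (hf' : ∀ y, HasDerivAt f' (f'' y) y) (hfg : ∀ y, f y - f'' y = g y)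
    (hf_atTop : Tendsto f atTop (𝓝 0))
    (hf'_atTop : Tendsto (fun y => exp (-y) * f' y) atTop (𝓝 0))
    (x : ℝ) (hint : IntegrableOn (fun y => exp (-|x - y|) * g y) (Ioi x)) :
    ∫ y in Ioi x, exp (-|x - y|) * g y = f x + f' x := by
  have hreflect (y : ℝ) : exp (-|-x - y|) * g (-y) = exp (-|x - -y|) * g (-y) := by
    rw [← abs_neg (x - -y)]; ring_nf
  -- `y ↦ f (-y)` solves the same equation with right-hand side `y ↦ g (-y)`.
  have := integral_Iic_exp_neg_abs_sub_mul (f := fun y => f (-y)) (f' := fun y => -f' (-y))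
    (f'' := fun y => f'' (-y)) (g := fun y => g (-y))
    (fun y => ((hf (-y)).comp y (hasDerivAt_neg' y)).congr_deriv (by ring))
    (fun y => ((hf' (-y)).comp y (hasDerivAt_neg' y)).neg.congr_deriv (by ring))
    (fun y => hfg (-y)) (hf_atTop.comp tendsto_neg_atBot_atTop)
    (by simpa using (hf'_atTop.comp tendsto_neg_atBot_atTop).neg) (-x) ?_
  · simp only [hreflect] at this
    rwa [integral_comp_neg_Iic (-x) (fun y => exp (-|x - y|) * g y), neg_neg,
      sub_neg_eq_add] at this
  · have := (integrableOn_Ici_iff_integrableOn_Ioi (by finiteness)).2 hint |>.comp_neg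
    rw [neg_Ici] at this
    exact this.congr_fun (fun y _ => (hreflect y).symm) measurableSet_Iic

theorem eq_half_integral_exp_neg_abs_sub_mul (hf : ∀ y, HasDerivAt f (f' y) y)
    (hf' : ∀ y, HasDerivAt f' (f'' y) y) (hfg : ∀ y, f y - f'' y = g y)
    (hlim : Tendsto f (cocompact ℝ) (𝓝 0)) {a b : ℝ} (hf'_le : ∀ y, |f' y| ≤ a + b * |y|)
    (x : ℝ) (hint : Integrable fun y => exp (-|x - y|) * g y) :
    f x = 1 / 2 * ∫ y, exp (-|x - y|) * g y := by
  have hf'_atTop : Tendsto (fun y => exp (-y) * f' y) atTop (𝓝 0) :=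
    (tendsto_exp_mul_atBot_of_abs_le (h := fun y => f' (-y)) fun y => by
      simpa using hf'_le (-y)).comp tendsto_neg_atTop_atBot |>.congr fun y => by simp
  rw [← intervalIntegral.integral_Iic_add_Ioi hint.integrableOn hint.integrableOn,
    integral_Iic_exp_neg_abs_sub_mul hf hf' hfg (hlim.mono_left atBot_le_cocompact)
      (tendsto_exp_mul_atBot_of_abs_le hf'_le) x hint.integrableOn,
    integral_Ioi_exp_neg_abs_sub_mul hf hf' hfg (hlim.mono_left atTop_le_cocompact) hf'_atTop x
      hint.integrableOn]
  ring

end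

/-- If `g` is continuous and bounded, `f` is `C²` with `f − f'' = g` and `f(x) → 0` as
`|x| → ∞`, then `f(x) = (1/2) ∫ e^{−|x−y|} g(y) dy`. -/
theorem green_function_formula (f g : ℝ → ℝ) (hg : Continuous g)
    (C : ℝ) (hgb : ∀ x : ℝ, |g x| ≤ C)
    (hf : ContDiff ℝ 2 f)
    (heq : ∀ x : ℝ, f x - deriv (deriv f) x = g x)
    (hlim : Tendsto f (cocompact ℝ) (nhds 0)) :
    ∀ x : ℝ, f x = (1 / 2) * ∫ y : ℝ, Real.exp (-|x - y|) * g y := by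
  have hf1 (y : ℝ) : HasDerivAt f (deriv f y) y := (hf.differentiable two_ne_zero y).hasDerivAt
  have hf2 (y : ℝ) : HasDerivAt (deriv f) (deriv (deriv f) y) y :=
    (hf.differentiable_deriv_two y).hasDerivAt
  obtain ⟨M, hM⟩ : ∃ M, ∀ y, |f y| ≤ M := by
    let F : ZeroAtInftyContinuousMap ℝ ℝ := ⟨⟨f, hf.continuous⟩, hlim⟩
    exact ⟨‖F.toBCF‖, F.toBCF.norm_coe_le_norm⟩
  have hf''_le (y : ℝ) : |deriv (deriv f) y| ≤ M + C := by
    rw [← sub_sub_cancel (f y) (deriv (deriv f) y), heq]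
    exact (abs_sub _ _).trans (add_le_add (hM y) (hgb y))
  exact fun x => eq_half_integral_exp_neg_abs_sub_mul hf1 hf2 heq hlim
    (abs_le_abs_add_mul_abs_of_abs_deriv_le hf2 hf''_le) x
    (integrable_exp_neg_abs_sub_mul hg.aestronglyMeasurable hgb x)
end

section
/- Let η : ℝ → ℝ be continuously differentiable with a ≤ η'(x) ≤ b for all x ∈ ℝ (0 < a < b), and let φ : ℝ → ℝ be continuous with |φ(x)| ≤ M for all x. Define f(x) = −(1/2) e^{−η(x)} ∫_{−∞}^{x} e^{η(y)} φ(y) η'(y) dy + (1/2) e^{η(x)} ∫_{x}^{∞} e^{−η(y)} φ(y) η'(y) dy. Then f is continuously differentiable, |f(x)| ≤ Mb/a for all x ∈ ℝ, and |f'(x)| ≤ (b²/a + b) M for all x ∈ ℝ. -/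
/-!
Because `η' ≥ 0` and `|φ| ≤ M`, the integrand on `(-∞, x]` is dominated by `M (e^η)'` and the one on
`[x, ∞)` by `M (-e^{-η})'`; as `η' ≥ a > 0`, `e^η → 0` at `-∞` and `e^{-η} → 0` at `+∞`. So
`e^{-η(x)} ∫_{-∞}^x … ≤ M` and `e^{η(x)} ∫_x^∞ … ≤ M`, whence `|f| ≤ M ≤ Mb/a`. Differentiating, the
two boundary terms combine to `-φη'`, so `f' = (η'/2)(e^{-η} ∫_{-∞}^x … + e^{η} ∫_x^∞ …) - φη'`
and `|f'| ≤ 2bM ≤ (b²/a + b)M`.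
-/

open Filter MeasureTheory Set Real Topology

section GrowthOfDerivBoundedBelow

variable {η : ℝ → ℝ} {a : ℝ}

theorem tendsto_atTop_of_pos_le_deriv (ha : 0 < a) (hη : Differentiable ℝ η)
    (hη' : ∀ x, a ≤ deriv η x) : Tendsto η atTop atTop := by
  refine tendsto_atTop_mono' _ ?_
    (tendsto_atTop_add_const_left _ (η 0) (tendsto_id.const_mul_atTop ha))
  filter_upwards [eventually_ge_atTop 0] with t ht
  have := mul_sub_le_image_sub_of_le_deriv hη hη' ht
  simp only [id, sub_zero] at this ⊢
  linarith

theorem tendsto_atBot_of_pos_le_deriv (ha : 0 < a) (hη : Differentiable ℝ η)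
    (hη' : ∀ x, a ≤ deriv η x) : Tendsto η atBot atBot := by
  refine tendsto_atBot_mono' _ ?_
    (tendsto_atBot_add_const_left _ (η 0) (tendsto_id.const_mul_atBot ha))
  filter_upwards [eventually_le_atBot 0] with t ht
  have := mul_sub_le_image_sub_of_le_deriv hη hη' ht
  simp only [id, zero_sub] at this ⊢
  linarith

end GrowthOfDerivBoundedBelow

theorem integrableOn_Iic_deriv_of_nonneg' {g g' : ℝ → ℝ} {a l : ℝ}
    (hderiv : ∀ x ∈ Iic a, HasDerivAt g (g' x) x) (g'pos : ∀ x ∈ Iio a, 0 ≤ g' x)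
    (hg : Tendsto g atBot (𝓝 l)) : IntegrableOn g' (Iic a) := by
  have hreflect : IntegrableOn (fun x => g' (-x)) (Ioi (-a)) := by
    refine integrableOn_Ioi_deriv_of_nonneg' (g := fun x => -g (-x)) (fun x hx => ?_)
      (fun x hx => g'pos _ (neg_lt.1 (mem_Ioi.1 hx))) (hg.comp tendsto_neg_atTop_atBot).neg
    have := ((hderiv (-x) (neg_le.1 (mem_Ici.1 hx))).comp x (hasDerivAt_neg x)).neg
    rwa [mul_neg_one, neg_neg] at this
  rw [integrableOn_Iic_iff_integrableOn_Iio]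
  simpa using hreflect.comp_neg_Iio

section Domination

variable {E : Type*} [NormedAddCommGroup E] {F : ℝ → E} {G G' : ℝ → ℝ}
  {M l : ℝ}

theorem integrableOn_Ioi_of_norm_le_mul_deriv (hG : ∀ y, HasDerivAt G (G' y) y)
    (hG' : ∀ y, 0 ≤ G' y) (hGl : Tendsto G atTop (𝓝 l)) (hF : AEStronglyMeasurable F)
    (hFM : ∀ y, ‖F y‖ ≤ M * G' y) (x : ℝ) : IntegrableOn F (Ioi x) :=
  ((integrableOn_Ioi_deriv_of_nonneg' (fun y _ => hG y) (fun y _ => hG' y) hGl).const_mul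
    M).mono' hF.restrict (ae_of_all _ hFM)

theorem norm_integral_Ioi_le_of_norm_le_mul_deriv [NormedSpace ℝ E]
    (hG : ∀ y, HasDerivAt G (G' y) y) (hG' : ∀ y, 0 ≤ G' y) (hGl : Tendsto G atTop (𝓝 l))
    (hFM : ∀ y, ‖F y‖ ≤ M * G' y) (x : ℝ) : ‖∫ y in Ioi x, F y‖ ≤ M * (l - G x) := by
  have hG'i := integrableOn_Ioi_deriv_of_nonneg' (a := x) (fun y _ => hG y) (fun y _ => hG' y) hGl
  calc ‖∫ y in Ioi x, F y‖ ≤ ∫ y in Ioi x, M * G' y :=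
        norm_integral_le_of_norm_le (hG'i.const_mul M) (ae_of_all _ hFM)
    _ = M * (l - G x) := by
        rw [integral_const_mul,
          integral_Ioi_of_hasDerivAt_of_nonneg' (fun y _ => hG y) (fun y _ => hG' y) hGl]

theorem integrableOn_Iic_of_norm_le_mul_deriv (hG : ∀ y, HasDerivAt G (G' y) y)
    (hG' : ∀ y, 0 ≤ G' y) (hGl : Tendsto G atBot (𝓝 l)) (hF : AEStronglyMeasurable F)
    (hFM : ∀ y, ‖F y‖ ≤ M * G' y) (x : ℝ) : IntegrableOn F (Iic x) :=
  ((integrableOn_Iic_deriv_of_nonneg' (fun y _ => hG y) (fun y _ => hG' y) hGl).const_mul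
    M).mono' hF.restrict (ae_of_all _ hFM)

theorem norm_integral_Iic_le_of_norm_le_mul_deriv [NormedSpace ℝ E]
    (hG : ∀ y, HasDerivAt G (G' y) y) (hG' : ∀ y, 0 ≤ G' y) (hGl : Tendsto G atBot (𝓝 l))
    (hFM : ∀ y, ‖F y‖ ≤ M * G' y) (x : ℝ) : ‖∫ y in Iic x, F y‖ ≤ M * (G x - l) := by
  have hG'i := integrableOn_Iic_deriv_of_nonneg' (a := x) (fun y _ => hG y) (fun y _ => hG' y) hGl
  calc ‖∫ y in Iic x, F y‖ ≤ ∫ y in Iic x, M * G' y :=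
        norm_integral_le_of_norm_le (hG'i.const_mul M) (ae_of_all _ hFM)
    _ = M * (G x - l) := by
        rw [integral_const_mul,
          integral_Iic_of_hasDerivAt_of_tendsto' (fun y _ => hG y) hG'i hGl]

end Domination

section Antiderivative

variable {E : Type*} [NormedAddCommGroup E] [NormedSpace ℝ E] [CompleteSpace E] {F : ℝ → E}

theorem hasDerivAt_integral_Iic (hF : Continuous F) (hFi : ∀ x, IntegrableOn F (Iic x))
    (x : ℝ) : HasDerivAt (fun t => ∫ y in Iic t, F y) (F x) x := by
  have h : (fun t => ∫ y in Iic t, F y) = fun t => (∫ y in Iic x, F y) + ∫ y in x..t, F y := by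
    funext t
    rw [← intervalIntegral.integral_Iic_sub_Iic (hFi x) (hFi t), add_sub_cancel]
  rw [h]
  exact (hF.integral_hasStrictDerivAt x x).hasDerivAt.const_add _

theorem hasDerivAt_integral_Ioi (hF : Continuous F) (hFi : ∀ x, IntegrableOn F (Ioi x))
    (x : ℝ) : HasDerivAt (fun t => ∫ y in Ioi t, F y) (-F x) x := by
  have h : (fun t => ∫ y in Ioi t, F y) = fun t => (∫ y in Ioi x, F y) - ∫ y in x..t, F y := by
    funext t
    rw [← intervalIntegral.integral_Ioi_sub_Ioi' (hFi x) (hFi t), sub_sub_cancel]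
  rw [h]
  exact (hF.integral_hasStrictDerivAt x x).hasDerivAt.const_sub _

end Antiderivative

theorem HasDerivAt.neg_exp_neg {f : ℝ → ℝ} {f' x : ℝ} (hf : HasDerivAt f f' x) :
    HasDerivAt (fun y => -Real.exp (-f y)) (Real.exp (-f x) * f') x :=
  hf.neg.exp.neg.congr_deriv (by simp only [Pi.neg_apply]; ring)

theorem tendsto_neg_exp_neg_of_tendsto_atTop {f : ℝ → ℝ} (hf : Tendsto f atTop atTop) :
    Tendsto (fun y => -exp (-f y)) atTop (𝓝 0) := by
  simpa using (tendsto_exp_neg_atTop_nhds_zero.comp hf).neg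

theorem norm_exp_mul_mul_le {p d M : ℝ} (c : ℝ) (hp : |p| ≤ M) (hd : 0 ≤ d) :
    ‖exp c * p * d‖ ≤ M * (exp c * d) := by
  rw [Real.norm_eq_abs, abs_mul, abs_mul, abs_exp, abs_of_nonneg hd]
  calc exp c * |p| * d ≤ exp c * M * d := by gcongr
    _ = M * (exp c * d) := by ring

section WeightedIntegrals

variable {η φ : ℝ → ℝ} {M : ℝ}

theorem integrableOn_Iic_exp_mul (hη : Differentiable ℝ η) (hη' : ∀ x, 0 ≤ deriv η x)
    (hηbot : Tendsto η atBot atBot) (hφ : AEStronglyMeasurable φ) (hφM : ∀ x, |φ x| ≤ M)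
    (x : ℝ) : IntegrableOn (fun y => exp (η y) * φ y * deriv η y) (Iic x) :=
  integrableOn_Iic_of_norm_le_mul_deriv (fun y => (hη y).hasDerivAt.exp)
    (fun y => mul_nonneg (exp_pos _).le (hη' y)) (tendsto_exp_atBot.comp hηbot)
    ((hη.continuous.rexp.aestronglyMeasurable.mul hφ).mul
      (measurable_deriv η).aestronglyMeasurable)
    (fun y => norm_exp_mul_mul_le _ (hφM y) (hη' y)) x

theorem integrableOn_Ioi_exp_neg_mul (hη : Differentiable ℝ η) (hη' : ∀ x, 0 ≤ deriv η x)
    (hηtop : Tendsto η atTop atTop) (hφ : AEStronglyMeasurable φ) (hφM : ∀ x, |φ x| ≤ M)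
    (x : ℝ) : IntegrableOn (fun y => exp (-η y) * φ y * deriv η y) (Ioi x) :=
  integrableOn_Ioi_of_norm_le_mul_deriv (fun y => (hη y).hasDerivAt.neg_exp_neg)
    (fun y => mul_nonneg (exp_pos _).le (hη' y)) (tendsto_neg_exp_neg_of_tendsto_atTop hηtop)
    ((hη.continuous.neg.rexp.aestronglyMeasurable.mul hφ).mul
      (measurable_deriv η).aestronglyMeasurable)
    (fun y => norm_exp_mul_mul_le _ (hφM y) (hη' y)) x

noncomputable def integralIicExpMul (η φ : ℝ → ℝ) (x : ℝ) : ℝ :=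
  ∫ y in Iic x, exp (η y) * φ y * deriv η y

noncomputable def integralIoiExpNegMul (η φ : ℝ → ℝ) (x : ℝ) : ℝ :=
  ∫ y in Ioi x, exp (-η y) * φ y * deriv η y

theorem hasDerivAt_integralIicExpMul (hη : Differentiable ℝ η) (hη'c : Continuous (deriv η))
    (hη' : ∀ x, 0 ≤ deriv η x) (hηbot : Tendsto η atBot atBot) (hφ : Continuous φ)
    (hφM : ∀ x, |φ x| ≤ M) (x : ℝ) :
    HasDerivAt (integralIicExpMul η φ) (exp (η x) * φ x * deriv η x) x :=
  hasDerivAt_integral_Iic ((hη.continuous.rexp.mul hφ).mul hη'c)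
    (integrableOn_Iic_exp_mul hη hη' hηbot hφ.aestronglyMeasurable hφM) x

theorem hasDerivAt_integralIoiExpNegMul (hη : Differentiable ℝ η)
    (hη'c : Continuous (deriv η)) (hη' : ∀ x, 0 ≤ deriv η x) (hηtop : Tendsto η atTop atTop)
    (hφ : Continuous φ) (hφM : ∀ x, |φ x| ≤ M) (x : ℝ) :
    HasDerivAt (integralIoiExpNegMul η φ) (-(exp (-η x) * φ x * deriv η x)) x :=
  hasDerivAt_integral_Ioi ((hη.continuous.neg.rexp.mul hφ).mul hη'c)
    (integrableOn_Ioi_exp_neg_mul hη hη' hηtop hφ.aestronglyMeasurable hφM) x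

theorem abs_exp_neg_mul_integralIicExpMul_le (hη : Differentiable ℝ η)
    (hη' : ∀ x, 0 ≤ deriv η x) (hηbot : Tendsto η atBot atBot) (hφM : ∀ x, |φ x| ≤ M)
    (x : ℝ) : |exp (-η x) * integralIicExpMul η φ x| ≤ M := by
  have h := norm_integral_Iic_le_of_norm_le_mul_deriv (fun y => (hη y).hasDerivAt.exp)
    (fun y => mul_nonneg (exp_pos _).le (hη' y)) (tendsto_exp_atBot.comp hηbot)
    (fun y => norm_exp_mul_mul_le _ (hφM y) (hη' y)) x
  rw [Real.norm_eq_abs, sub_zero] at h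
  rw [abs_mul, abs_exp]
  calc exp (-η x) * |integralIicExpMul η φ x| ≤ exp (-η x) * (M * exp (η x)) := by gcongr; exact h
    _ = M := by rw [exp_neg]; field_simp

theorem abs_exp_mul_integralIoiExpNegMul_le (hη : Differentiable ℝ η)
    (hη' : ∀ x, 0 ≤ deriv η x) (hηtop : Tendsto η atTop atTop) (hφM : ∀ x, |φ x| ≤ M)
    (x : ℝ) : |exp (η x) * integralIoiExpNegMul η φ x| ≤ M := by
  have h := norm_integral_Ioi_le_of_norm_le_mul_deriv (fun y => (hη y).hasDerivAt.neg_exp_neg)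
    (fun y => mul_nonneg (exp_pos _).le (hη' y)) (tendsto_neg_exp_neg_of_tendsto_atTop hηtop)
    (fun y => norm_exp_mul_mul_le _ (hφM y) (hη' y)) x
  rw [Real.norm_eq_abs, zero_sub, neg_neg] at h
  rw [abs_mul, abs_exp]
  calc exp (η x) * |integralIoiExpNegMul η φ x| ≤ exp (η x) * (M * exp (-η x)) := by gcongr; exact h
    _ = M := by rw [exp_neg]; field_simp

end WeightedIntegrals

theorem hasDerivAt_exp_combination {η g h : ℝ → ℝ} {η' p q x : ℝ} (hη : HasDerivAt η η' x)
    (hg : HasDerivAt g (exp (η x) * p * q) x) (hh : HasDerivAt h (-(exp (-η x) * p * q)) x) :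
    HasDerivAt (fun t => -(1 / 2) * exp (-η t) * g t + 1 / 2 * exp (η t) * h t)
      (η' / 2 * (exp (-η x) * g x + exp (η x) * h x) - p * q) x := by
  refine (((hη.neg.exp.const_mul (-(1 / 2))).mul hg).add
    ((hη.exp.const_mul (1 / 2)).mul hh)).congr_deriv ?_
  simp only [Pi.neg_apply, exp_neg]
  field_simp
  ring

theorem abs_neg_half_mul_add_half_mul_le {s t u v M : ℝ} (hu : |s * u| ≤ M)
    (hv : |t * v| ≤ M) : |-(1 / 2) * s * u + 1 / 2 * t * v| ≤ M := by
  obtain ⟨hu₁, hu₂⟩ := abs_le.1 hu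
  obtain ⟨hv₁, hv₂⟩ := abs_le.1 hv
  exact abs_le.2 ⟨by linarith, by linarith⟩

theorem abs_half_mul_add_sub_mul_le {d u v p M : ℝ} (hd : 0 ≤ d) (hu : |u| ≤ M) (hv : |v| ≤ M)
    (hp : |p| ≤ M) : |d / 2 * (u + v) - p * d| ≤ 2 * M * d :=
  calc |d / 2 * (u + v) - p * d| ≤ |d / 2 * (u + v)| + |p * d| := abs_sub _ _
    _ = d / 2 * |u + v| + |p| * d := by
        rw [abs_mul, abs_mul, abs_of_nonneg (by linarith), abs_of_nonneg hd]
    _ ≤ d / 2 * (M + M) + M * d := by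
        gcongr
        exact (abs_add_le u v).trans (add_le_add hu hv)
    _ = 2 * M * d := by ring

theorem L_eta_bounds_general (η φ f : ℝ → ℝ) (a b M : ℝ) (ha : 0 < a)
    (hη : ContDiff ℝ 1 η) (hη' : ∀ x : ℝ, a ≤ deriv η x ∧ deriv η x ≤ b)
    (hφ : Continuous φ) (hφM : ∀ x : ℝ, |φ x| ≤ M)
    (hf : ∀ x : ℝ, f x =
      -(1 / 2) * Real.exp (-η x) * (∫ y in Set.Iic x, Real.exp (η y) * φ y * deriv η y) +
      (1 / 2) * Real.exp (η x) * ∫ y in Set.Ioi x, Real.exp (-η y) * φ y * deriv η y) :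
    ContDiff ℝ 1 f ∧ (∀ x : ℝ, |f x| ≤ M * b / a) ∧
      ∀ x : ℝ, |deriv f x| ≤ (b ^ 2 / a + b) * M := by
  have hηd : Differentiable ℝ η := hη.differentiable one_ne_zero
  have hη'c : Continuous (deriv η) := hη.continuous_deriv le_rfl
  have hη'0 (x : ℝ) : 0 ≤ deriv η x := ha.le.trans (hη' x).1
  have hηtop := tendsto_atTop_of_pos_le_deriv ha hηd fun x => (hη' x).1
  have hηbot := tendsto_atBot_of_pos_le_deriv ha hηd fun x => (hη' x).1
  have hI := hasDerivAt_integralIicExpMul hηd hη'c hη'0 hηbot hφ hφM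
  have hJ := hasDerivAt_integralIoiExpNegMul hηd hη'c hη'0 hηtop hφ hφM
  have hA := abs_exp_neg_mul_integralIicExpMul_le hηd hη'0 hηbot hφM
  have hB := abs_exp_mul_integralIoiExpNegMul_le hηd hη'0 hηtop hφM
  have hf' (x : ℝ) : HasDerivAt f (deriv η x / 2 * (exp (-η x) * integralIicExpMul η φ x +
      exp (η x) * integralIoiExpNegMul η φ x) - φ x * deriv η x) x := by
    rw [show f = _ from funext hf]
    exact hasDerivAt_exp_combination (hηd x).hasDerivAt (hI x) (hJ x)
  have hM : 0 ≤ M := (abs_nonneg _).trans (hφM 0)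
  have hab : a ≤ b := (hη' 0).1.trans (hη' 0).2
  refine ⟨?_, fun x => ?_, fun x => ?_⟩
  · have hIc := continuous_iff_continuousAt.2 fun x => (hI x).continuousAt
    have hJc := continuous_iff_continuousAt.2 fun x => (hJ x).continuousAt
    rw [contDiff_one_iff_deriv, funext fun x => (hf' x).deriv]
    exact ⟨fun x => (hf' x).differentiableAt, by fun_prop⟩
  · calc |f x| ≤ M := hf x ▸ abs_neg_half_mul_add_half_mul_le (hA x) (hB x)
      _ ≤ M * b / a := (le_div_iff₀ ha).2 (mul_le_mul_of_nonneg_left hab hM)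
  · have hbba : b ≤ b ^ 2 / a := (le_div_iff₀ ha).2 (by nlinarith)
    calc |deriv f x| ≤ 2 * M * deriv η x := (hf' x).deriv ▸
          abs_half_mul_add_sub_mul_le (hη'0 x) (hA x) (hB x) (hφM x)
      _ ≤ 2 * M * b := by gcongr; exact (hη' x).2
      _ ≤ (b ^ 2 / a + b) * M := by nlinarith

/-- For `η` a `C¹` map with `a ≤ η' ≤ b` (`0 < a < b`) and `φ` continuous with `|φ| ≤ M`,
the function
`f(x) = −(1/2) e^{−η(x)} ∫_{−∞}^x e^{η(y)} φ(y) η'(y) dy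
        + (1/2) e^{η(x)} ∫_x^∞ e^{−η(y)} φ(y) η'(y) dy`
is `C¹` with `|f| ≤ Mb/a` and `|f'| ≤ (b²/a + b) M`. -/
theorem L_eta_bounds (η φ f : ℝ → ℝ) (a b M : ℝ) (ha : 0 < a) (hab : a < b)
    (hη : ContDiff ℝ 1 η) (hη' : ∀ x : ℝ, a ≤ deriv η x ∧ deriv η x ≤ b)
    (hφ : Continuous φ) (hφM : ∀ x : ℝ, |φ x| ≤ M)
    (hf : ∀ x : ℝ, f x =
      -(1 / 2) * Real.exp (-η x) * (∫ y in Set.Iic x, Real.exp (η y) * φ y * deriv η y) +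
      (1 / 2) * Real.exp (η x) * ∫ y in Set.Ioi x, Real.exp (-η y) * φ y * deriv η y) :
    ContDiff ℝ 1 f ∧ (∀ x : ℝ, |f x| ≤ M * b / a) ∧
      ∀ x : ℝ, |deriv f x| ≤ (b ^ 2 / a + b) * M :=
  L_eta_bounds_general η φ f a b M ha hη hη' hφ hφM hf
end
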